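/- (Corollary 5.2) Let L, M, N, g₁₁, g₁₂, g₂₂ be twice continuously differentiable on W × (0,T) ⊂ ℝ² × ℝ with det g := g₁₁g₂₂ − g₁₂² > 0 and M < 0 everywhere, and suppose that for each t the Gauss–Codazzi equations hold. Define u := √(½(−(L−N) + √((L−N)² + 4M²))), v := √(½((L−N) + √((L−N)² + 4M²))), and p := L − v² (which equals N − u²). Suppose further that: ∂_t u = Γ¹₂₂L − 2Γ¹₁₂M + Γ¹₁₁N, ∂_t v = Γ²₂₂L − 2Γ²₁₂M + Γ²₁₁N, and ∂₁₁(u²) + 2∂₁₂(uv) + ∂₂₂(v²) = −(∂₁₁p + ∂₂₂p). Then (u, v, p) satisfies the momentum equations ∂₁(u²+p)+∂₂(uv) = −∂_t u and ∂₁(uv)+∂₂(v²+p) = −∂_t v, and ∂_t(∂₁u + ∂₂v) = 0; in particular, if ∂₁u + ∂₂v = 0 at some time t₀ ∈ (0,T), then (u, v, p) satisfies the full incompressible Euler equations on W × (0,T). -/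

import Mathlib

/-!
The square roots are chosen so that `u² - v² = N - L` and `u v = |M| = -M`. Hence `u² + p = N`,
`v² + p = L` and `u v = -M`, and the two Codazzi equations, combined with the evolution equations
for `u` and `v`, are exactly the momentum equations. By symmetry of second derivatives,
`∂ₜ(∂₁u + ∂₂v) = ∂₁∂ₜu + ∂₂∂ₜv`; substituting the momentum equations turns this into
`-(∂₁₁(u²) + 2∂₁₂(uv) + ∂₂₂(v²) + ∂₁₁p + ∂₂₂p)`, which vanishes by the pressure Poisson equation.
So the divergence is constant in time on each slice `{x} × (0, T)`.
-/

noncomputable def pdx1 (f : ℝ × ℝ × ℝ → ℝ) (q : ℝ × ℝ × ℝ) : ℝ :=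
  deriv (fun s => f (s, q.2.1, q.2.2)) q.1

noncomputable def pdx2 (f : ℝ × ℝ × ℝ → ℝ) (q : ℝ × ℝ × ℝ) : ℝ :=
  deriv (fun s => f (q.1, s, q.2.2)) q.2.1

noncomputable def pdt (f : ℝ × ℝ × ℝ → ℝ) (q : ℝ × ℝ × ℝ) : ℝ :=
  deriv (fun s => f (q.1, q.2.1, s)) q.2.2

/-- Determinant of the metric `g₁₁g₂₂ - g₁₂²`. -/
noncomputable def detg (g11 g12 g22 : ℝ × ℝ × ℝ → ℝ) (q : ℝ × ℝ × ℝ) : ℝ :=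
  g11 q * g22 q - (g12 q) ^ 2

/-- Christoffel symbol Γ¹₁₁. -/
noncomputable def Gamma1_11 (g11 g12 g22 : ℝ × ℝ × ℝ → ℝ) (q : ℝ × ℝ × ℝ) : ℝ :=
  (g22 q * pdx1 g11 q - g12 q * (2 * pdx1 g12 q - pdx2 g11 q)) / (2 * detg g11 g12 g22 q)

/-- Christoffel symbol Γ¹₁₂. -/
noncomputable def Gamma1_12 (g11 g12 g22 : ℝ × ℝ × ℝ → ℝ) (q : ℝ × ℝ × ℝ) : ℝ :=
  (g22 q * pdx2 g11 q - g12 q * pdx1 g22 q) / (2 * detg g11 g12 g22 q)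

/-- Christoffel symbol Γ¹₂₂. -/
noncomputable def Gamma1_22 (g11 g12 g22 : ℝ × ℝ × ℝ → ℝ) (q : ℝ × ℝ × ℝ) : ℝ :=
  (g22 q * (2 * pdx2 g12 q - pdx1 g22 q) - g12 q * pdx2 g22 q) / (2 * detg g11 g12 g22 q)

/-- Christoffel symbol Γ²₁₁. -/
noncomputable def Gamma2_11 (g11 g12 g22 : ℝ × ℝ × ℝ → ℝ) (q : ℝ × ℝ × ℝ) : ℝ :=
  (-(g12 q) * pdx1 g11 q + g11 q * (2 * pdx1 g12 q - pdx2 g11 q)) / (2 * detg g11 g12 g22 q)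

/-- Christoffel symbol Γ²₁₂. -/
noncomputable def Gamma2_12 (g11 g12 g22 : ℝ × ℝ × ℝ → ℝ) (q : ℝ × ℝ × ℝ) : ℝ :=
  (-(g12 q) * pdx2 g11 q + g11 q * pdx1 g22 q) / (2 * detg g11 g12 g22 q)

/-- Christoffel symbol Γ²₂₂. -/
noncomputable def Gamma2_22 (g11 g12 g22 : ℝ × ℝ × ℝ → ℝ) (q : ℝ × ℝ × ℝ) : ℝ :=
  (-(g12 q) * (2 * pdx2 g12 q - pdx1 g22 q) + g11 q * pdx2 g22 q) / (2 * detg g11 g12 g22 q)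

/-- Gauss curvature of `g` via the Brioschi formula (spatial derivatives). -/
noncomputable def brioschi (g11 g12 g22 : ℝ × ℝ × ℝ → ℝ) (q : ℝ × ℝ × ℝ) : ℝ :=
  (1 / (2 * (detg g11 g12 g22 q) ^ 2)) *
    Matrix.det !![-(pdx2 (pdx2 g11) q) + 2 * pdx1 (pdx2 g12) q - pdx1 (pdx1 g22) q,
                    pdx1 g11 q, 2 * pdx1 g12 q - pdx2 g11 q;
                  2 * pdx2 g12 q - pdx1 g22 q, 2 * g11 q, 2 * g12 q;
                  pdx2 g22 q, 2 * g12 q, 2 * g22 q]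
  - (1 / (2 * (detg g11 g12 g22 q) ^ 2)) *
    Matrix.det !![0, pdx2 g11 q, pdx1 g22 q;
                  pdx2 g11 q, 2 * g11 q, 2 * g12 q;
                  pdx1 g22 q, 2 * g12 q, 2 * g22 q]

/-- The Gauss–Codazzi equations for `(L, M, N)` and the metric `g` at the point `q`. -/
def GaussCodazzi (L M N g11 g12 g22 : ℝ × ℝ × ℝ → ℝ) (q : ℝ × ℝ × ℝ) : Prop :=
  pdx1 N q - pdx2 M q =
    -(Gamma1_22 g11 g12 g22 q) * L q + 2 * Gamma1_12 g11 g12 g22 q * M q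
      - Gamma1_11 g11 g12 g22 q * N q ∧
  pdx1 M q - pdx2 L q =
    Gamma2_22 g11 g12 g22 q * L q - 2 * Gamma2_12 g11 g12 g22 q * M q
      + Gamma2_11 g11 g12 g22 q * N q ∧
  L q * N q - (M q) ^ 2 = brioschi g11 g12 g22 q

open Filter Set Topology

section LineDeriv

variable {𝕜 : Type*} [NontriviallyNormedField 𝕜] {E F : Type*} [NormedAddCommGroup E]
  [NormedSpace 𝕜 E] [NormedAddCommGroup F] [NormedSpace 𝕜 F] {f g : E → F} {x v : E}

theorem lineDeriv_fun_neg : lineDeriv 𝕜 (fun y => -f y) x v = -lineDeriv 𝕜 f x v :=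
  deriv.fun_neg

theorem lineDeriv_fun_add (hf : LineDifferentiableAt 𝕜 f x v) (hg : LineDifferentiableAt 𝕜 g x v) :
    lineDeriv 𝕜 (fun y => f y + g y) x v = lineDeriv 𝕜 f x v + lineDeriv 𝕜 g x v :=
  deriv_fun_add hf hg

end LineDeriv

theorem pdx1_eq_lineDeriv (f : ℝ × ℝ × ℝ → ℝ) : pdx1 f = fun q => lineDeriv ℝ f q (1, 0, 0) := by
  funext ⟨a, b, c⟩
  simpa [pdx1, lineDeriv] using (deriv_comp_const_add (fun s => f (s, b, c)) a 0).symm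

theorem pdx2_eq_lineDeriv (f : ℝ × ℝ × ℝ → ℝ) : pdx2 f = fun q => lineDeriv ℝ f q (0, 1, 0) := by
  funext ⟨a, b, c⟩
  simpa [pdx2, lineDeriv] using (deriv_comp_const_add (fun s => f (a, s, c)) b 0).symm

theorem pdt_eq_lineDeriv (f : ℝ × ℝ × ℝ → ℝ) : pdt f = fun q => lineDeriv ℝ f q (0, 0, 1) := by
  funext ⟨a, b, c⟩
  simpa [pdt, lineDeriv] using (deriv_comp_const_add (fun s => f (a, b, s)) c 0).symm

namespace ContDiffOn

variable {E : Type*} [NormedAddCommGroup E] [NormedSpace ℝ E] {D : Set E} {f g : E → ℝ} {q : E}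

theorem hasFDerivAt_lineDeriv (hf : ContDiffOn ℝ 2 f D) (hD : IsOpen D) (hq : q ∈ D) (w : E) :
    HasFDerivAt (lineDeriv ℝ f · w)
      ((ContinuousLinearMap.apply ℝ ℝ w).comp (fderiv ℝ (fderiv ℝ f) q)) q := by
  have hf' : DifferentiableAt ℝ (fderiv ℝ f) q :=
    ((hf.fderiv_of_isOpen (m := 1) hD (by norm_num)).differentiableOn one_ne_zero).differentiableAt
      (hD.mem_nhds hq)
  have hlin : (lineDeriv ℝ f · w) =ᶠ[𝓝 q] (fderiv ℝ f · w) := by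
    filter_upwards [hD.mem_nhds hq] with r hr
    exact ((hf.differentiableOn two_ne_zero).differentiableAt (hD.mem_nhds hr)).lineDeriv_eq_fderiv
  exact ((ContinuousLinearMap.apply ℝ ℝ w).hasFDerivAt.comp q hf'.hasFDerivAt).congr_of_eventuallyEq
    hlin

theorem lineDeriv_lineDeriv_comm (hf : ContDiffOn ℝ 2 f D) (hD : IsOpen D) (hq : q ∈ D) (v w : E) :
    lineDeriv ℝ (lineDeriv ℝ f · w) q v = lineDeriv ℝ (lineDeriv ℝ f · v) q w := by
  rw [((hf.hasFDerivAt_lineDeriv hD hq w).hasLineDerivAt v).lineDeriv,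
    ((hf.hasFDerivAt_lineDeriv hD hq v).hasLineDerivAt w).lineDeriv]
  exact ((hf.contDiffAt (hD.mem_nhds hq)).isSymmSndFDerivAt (by simp)) v w

theorem lineDeriv_add_lineDeriv (hf : ContDiffOn ℝ 2 f D) (hg : ContDiffOn ℝ 2 g D) (hD : IsOpen D)
    (hq : q ∈ D) (v a b : E) :
    lineDeriv ℝ (fun r => lineDeriv ℝ f r a + lineDeriv ℝ g r b) q v
      = lineDeriv ℝ (lineDeriv ℝ f · a) q v + lineDeriv ℝ (lineDeriv ℝ g · b) q v :=
  lineDeriv_fun_add (hf.hasFDerivAt_lineDeriv hD hq a).differentiableAt.lineDifferentiableAt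
    (hg.hasFDerivAt_lineDeriv hD hq b).differentiableAt.lineDifferentiableAt

theorem lineDeriv_lineDeriv_add (hf : ContDiffOn ℝ 2 f D) (hg : ContDiffOn ℝ 2 g D) (hD : IsOpen D)
    (hq : q ∈ D) (v w : E) :
    lineDeriv ℝ (lineDeriv ℝ (fun r => f r + g r) · w) q v
      = lineDeriv ℝ (lineDeriv ℝ f · w) q v + lineDeriv ℝ (lineDeriv ℝ g · w) q v := by
  rw [← hf.lineDeriv_add_lineDeriv hg hD hq]
  refine EventuallyEq.lineDeriv_eq ?_
  filter_upwards [hD.mem_nhds hq] with r hr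
  have hdiff {φ : E → ℝ} (hφ : ContDiffOn ℝ 2 φ D) : LineDifferentiableAt ℝ φ r w :=
    ((hφ.differentiableOn two_ne_zero).differentiableAt (hD.mem_nhds hr)).lineDifferentiableAt
  exact lineDeriv_fun_add (hdiff hf) (hdiff hg)

end ContDiffOn

section Euler

variable {E : Type*} [NormedAddCommGroup E] [NormedSpace ℝ E] {D : Set E} {u v p : E → ℝ}
  {e₁ e₂ eₜ q : E}

theorem lineDeriv_divergence_eq_zero_of_euler (hD : IsOpen D) (hu : ContDiffOn ℝ 2 u D)
    (hv : ContDiffOn ℝ 2 v D) (hp : ContDiffOn ℝ 2 p D)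
    (hmom₁ : ∀ r ∈ D, lineDeriv ℝ (fun r => u r ^ 2 + p r) r e₁
      + lineDeriv ℝ (fun r => u r * v r) r e₂ = -lineDeriv ℝ u r eₜ)
    (hmom₂ : ∀ r ∈ D, lineDeriv ℝ (fun r => u r * v r) r e₁
      + lineDeriv ℝ (fun r => v r ^ 2 + p r) r e₂ = -lineDeriv ℝ v r eₜ)
    (hq : q ∈ D)
    (hpoisson : lineDeriv ℝ (lineDeriv ℝ (fun r => u r ^ 2) · e₁) q e₁
      + 2 * lineDeriv ℝ (lineDeriv ℝ (fun r => u r * v r) · e₂) q e₁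
      + lineDeriv ℝ (lineDeriv ℝ (fun r => v r ^ 2) · e₂) q e₂
      = -(lineDeriv ℝ (lineDeriv ℝ p · e₁) q e₁ + lineDeriv ℝ (lineDeriv ℝ p · e₂) q e₂)) :
    lineDeriv ℝ (fun r => lineDeriv ℝ u r e₁ + lineDeriv ℝ v r e₂) q eₜ = 0 := by
  have huu : ContDiffOn ℝ 2 (fun r => u r ^ 2) D := hu.pow 2
  have huv : ContDiffOn ℝ 2 (fun r => u r * v r) D := hu.mul hv
  have hvv : ContDiffOn ℝ 2 (fun r => v r ^ 2) D := hv.pow 2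
  have hnhds : D ∈ 𝓝 q := hD.mem_nhds hq
  have htu : lineDeriv ℝ (lineDeriv ℝ u · eₜ) q e₁
      = -(lineDeriv ℝ (lineDeriv ℝ (fun r => u r ^ 2) · e₁) q e₁
        + lineDeriv ℝ (lineDeriv ℝ p · e₁) q e₁
        + lineDeriv ℝ (lineDeriv ℝ (fun r => u r * v r) · e₂) q e₁) := by
    have hdtu : EqOn (lineDeriv ℝ u · eₜ) (fun r => -(lineDeriv ℝ (fun r => u r ^ 2 + p r) r e₁
        + lineDeriv ℝ (fun r => u r * v r) r e₂)) D :=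
      fun r hr => neg_eq_iff_eq_neg.mp (hmom₁ r hr).symm
    rw [(hdtu.eventuallyEq_of_mem hnhds).lineDeriv_eq, lineDeriv_fun_neg,
      (huu.add hp).lineDeriv_add_lineDeriv huv hD hq, huu.lineDeriv_lineDeriv_add hp hD hq]
  have htv : lineDeriv ℝ (lineDeriv ℝ v · eₜ) q e₂
      = -(lineDeriv ℝ (lineDeriv ℝ (fun r => u r * v r) · e₁) q e₂
        + lineDeriv ℝ (lineDeriv ℝ (fun r => v r ^ 2) · e₂) q e₂
        + lineDeriv ℝ (lineDeriv ℝ p · e₂) q e₂) := by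
    have hdtv : EqOn (lineDeriv ℝ v · eₜ) (fun r => -(lineDeriv ℝ (fun r => u r * v r) r e₁
        + lineDeriv ℝ (fun r => v r ^ 2 + p r) r e₂)) D :=
      fun r hr => neg_eq_iff_eq_neg.mp (hmom₂ r hr).symm
    rw [(hdtv.eventuallyEq_of_mem hnhds).lineDeriv_eq, lineDeriv_fun_neg,
      huv.lineDeriv_add_lineDeriv (hvv.add hp) hD hq, hvv.lineDeriv_lineDeriv_add hp hD hq, add_assoc]
  rw [hu.lineDeriv_add_lineDeriv hv hD hq, hu.lineDeriv_lineDeriv_comm hD hq,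
    hv.lineDeriv_lineDeriv_comm hD hq, htu, htv, huv.lineDeriv_lineDeriv_comm hD hq e₂ e₁]
  linarith

end Euler

theorem abs_lt_sqrt_sq_add_four_mul_sq (a : ℝ) {m : ℝ} (hm : m ≠ 0) :
    |a| < √(a ^ 2 + 4 * m ^ 2) := by
  rw [← Real.sqrt_sq_eq_abs]
  exact Real.sqrt_lt_sqrt (sq_nonneg a) (lt_add_of_pos_right _ (by positivity))

theorem sq_sqrt_half_sub_sq_sqrt_half (a m : ℝ) :
    √((1 / 2) * (-a + √(a ^ 2 + 4 * m ^ 2))) ^ 2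
      - √((1 / 2) * (a + √(a ^ 2 + 4 * m ^ 2))) ^ 2 = -a := by
  have h : |a| ≤ √(a ^ 2 + 4 * m ^ 2) := Real.abs_le_sqrt (by nlinarith)
  rw [Real.sq_sqrt (by linarith [le_abs_self a]), Real.sq_sqrt (by linarith [neg_abs_le a])]
  ring

theorem sqrt_half_mul_sqrt_half (a m : ℝ) :
    √((1 / 2) * (-a + √(a ^ 2 + 4 * m ^ 2))) * √((1 / 2) * (a + √(a ^ 2 + 4 * m ^ 2))) = |m| := by
  have h : |a| ≤ √(a ^ 2 + 4 * m ^ 2) := Real.abs_le_sqrt (by nlinarith)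
  have hs : √(a ^ 2 + 4 * m ^ 2) ^ 2 = a ^ 2 + 4 * m ^ 2 := Real.sq_sqrt (by positivity)
  rw [← Real.sqrt_mul (by linarith [le_abs_self a]), ← Real.sqrt_sq_eq_abs]
  congr 1
  linear_combination (1 / 4) * hs

theorem ContDiffOn.sqrt_half_add_sqrt {E : Type*} [NormedAddCommGroup E] [NormedSpace ℝ E]
    {D : Set E} {n : WithTop ℕ∞} {a b m : E → ℝ} (hb : ContDiffOn ℝ n b D)
    (ha : ContDiffOn ℝ n a D) (hm : ContDiffOn ℝ n m D) (hm0 : ∀ x ∈ D, m x ≠ 0)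
    (hba : ∀ x ∈ D, |b x| ≤ |a x|) :
    ContDiffOn ℝ n (fun x => √((1 / 2) * (b x + √(a x ^ 2 + 4 * m x ^ 2)))) D := by
  refine (contDiffOn_const.mul (hb.add (((ha.pow 2).add (contDiffOn_const.mul (hm.pow 2))).sqrt
    fun x hx => ?_))).sqrt fun x hx => ?_
  · have := hm0 x hx
    positivity
  · have := abs_lt_sqrt_sq_add_four_mul_sq (a x) (hm0 x hx)
    have : 0 < b x + √(a x ^ 2 + 4 * m x ^ 2) := by linarith [neg_abs_le (b x), hba x hx]
    positivity

theorem momentum_of_gaussCodazzi {L M N g11 g12 g22 u v p : ℝ × ℝ × ℝ → ℝ} {q : ℝ × ℝ × ℝ}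
    (hGC : GaussCodazzi L M N g11 g12 g22 q)
    (hN : (fun r => u r ^ 2 + p r) = N) (hL : (fun r => v r ^ 2 + p r) = L)
    (huv : (fun r => u r * v r) =ᶠ[𝓝 q] fun r => -M r)
    (hevolu : pdt u q = Gamma1_22 g11 g12 g22 q * L q - 2 * Gamma1_12 g11 g12 g22 q * M q
      + Gamma1_11 g11 g12 g22 q * N q)
    (hevolv : pdt v q = Gamma2_22 g11 g12 g22 q * L q - 2 * Gamma2_12 g11 g12 g22 q * M q
      + Gamma2_11 g11 g12 g22 q * N q) :
    pdx1 (fun r => u r ^ 2 + p r) q + pdx2 (fun r => u r * v r) q = -pdt u q ∧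
      pdx1 (fun r => u r * v r) q + pdx2 (fun r => v r ^ 2 + p r) q = -pdt v q := by
  obtain ⟨hGC₁, hGC₂, -⟩ := hGC
  rw [hN, hL, hevolu, hevolv]
  simp only [pdx1_eq_lineDeriv, pdx2_eq_lineDeriv] at hGC₁ hGC₂ ⊢
  rw [huv.lineDeriv_eq, huv.lineDeriv_eq, lineDeriv_fun_neg, lineDeriv_fun_neg]
  constructor <;> linarith

theorem eqOn_zero_of_pdt_eq_zero {Ω : Set (ℝ × ℝ)} {a b t₀ : ℝ} {D : Set (ℝ × ℝ × ℝ)}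
    {f : ℝ × ℝ × ℝ → ℝ} (hD : D = {q : ℝ × ℝ × ℝ | (q.1, q.2.1) ∈ Ω ∧ q.2.2 ∈ Ioo a b})
    (hf : ∀ q ∈ D, DifferentiableAt ℝ f q) (hpdt : ∀ q ∈ D, pdt f q = 0) (ht₀ : t₀ ∈ Ioo a b)
    (h0 : ∀ q ∈ D, q.2.2 = t₀ → f q = 0) :
    ∀ q ∈ D, f q = 0 := by
  subst hD
  rintro ⟨x, y, t⟩ ⟨hxy, ht⟩
  have hslice : ∀ τ ∈ Ioo a b,
      ((x, y, τ) : ℝ × ℝ × ℝ) ∈ {q : ℝ × ℝ × ℝ | (q.1, q.2.1) ∈ Ω ∧ q.2.2 ∈ Ioo a b} :=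
    fun τ hτ => ⟨hxy, hτ⟩
  calc f (x, y, t) = f (x, y, t₀) :=
        isOpen_Ioo.is_const_of_deriv_eq_zero (f := fun τ => f (x, y, τ)) isPreconnected_Ioo
          (fun τ hτ => ((hf _ (hslice τ hτ)).comp τ (by fun_prop)).differentiableWithinAt)
          (fun τ hτ => hpdt _ (hslice τ hτ)) ht ht₀
    _ = 0 := h0 _ (hslice t₀ ht₀) rfl

theorem statement11_general (Ω : Set (ℝ × ℝ)) (hΩ : IsOpen Ω) (T : ℝ)
    (L M N g11 g12 g22 : ℝ × ℝ × ℝ → ℝ)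
    (D : Set (ℝ × ℝ × ℝ))
    (hD : D = {q : ℝ × ℝ × ℝ | (q.1, q.2.1) ∈ Ω ∧ q.2.2 ∈ Set.Ioo 0 T})
    (hLreg : ContDiffOn ℝ 2 L D) (hMreg : ContDiffOn ℝ 2 M D) (hNreg : ContDiffOn ℝ 2 N D)
    (hMneg : ∀ q ∈ D, M q < 0)
    (hGC : ∀ q ∈ D, GaussCodazzi L M N g11 g12 g22 q)
    (u v p : ℝ × ℝ × ℝ → ℝ)
    (hu : u = fun q =>
      Real.sqrt ((1 / 2) * (-(L q - N q) + Real.sqrt ((L q - N q) ^ 2 + 4 * (M q) ^ 2))))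
    (hv : v = fun q =>
      Real.sqrt ((1 / 2) * ((L q - N q) + Real.sqrt ((L q - N q) ^ 2 + 4 * (M q) ^ 2))))
    (hp : p = fun q => L q - (v q) ^ 2)
    (hevolu : ∀ q ∈ D, pdt u q =
      Gamma1_22 g11 g12 g22 q * L q - 2 * Gamma1_12 g11 g12 g22 q * M q
        + Gamma1_11 g11 g12 g22 q * N q)
    (hevolv : ∀ q ∈ D, pdt v q =
      Gamma2_22 g11 g12 g22 q * L q - 2 * Gamma2_12 g11 g12 g22 q * M q
        + Gamma2_11 g11 g12 g22 q * N q)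
    (hpoisson : ∀ q ∈ D,
      pdx1 (pdx1 (fun r => (u r) ^ 2)) q + 2 * pdx1 (pdx2 (fun r => u r * v r)) q
        + pdx2 (pdx2 (fun r => (v r) ^ 2)) q
      = -(pdx1 (pdx1 p) q + pdx2 (pdx2 p) q)) :
    (∀ q ∈ D,
      pdx1 (fun r => (u r) ^ 2 + p r) q + pdx2 (fun r => u r * v r) q = -(pdt u q) ∧
      pdx1 (fun r => u r * v r) q + pdx2 (fun r => (v r) ^ 2 + p r) q = -(pdt v q) ∧
      pdt (fun r => pdx1 u r + pdx2 v r) q = 0) ∧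
    (∀ t₀ ∈ Set.Ioo 0 T,
      (∀ q ∈ D, q.2.2 = t₀ → pdx1 u q + pdx2 v q = 0) →
      ∀ q ∈ D, pdx1 u q + pdx2 v q = 0) := by
  have hDo : IsOpen D := by
    rw [hD]
    exact (hΩ.preimage (by fun_prop)).inter (isOpen_Ioo.preimage (by fun_prop))
  have hM0 : ∀ q ∈ D, M q ≠ 0 := fun q hq => (hMneg q hq).ne
  have hureg : ContDiffOn ℝ 2 u D := hu ▸ (hLreg.sub hNreg).neg.sqrt_half_add_sqrt
    (hLreg.sub hNreg) hMreg hM0 fun q _ => (abs_neg _).le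
  have hvreg : ContDiffOn ℝ 2 v D := hv ▸ (hLreg.sub hNreg).sqrt_half_add_sqrt
    (hLreg.sub hNreg) hMreg hM0 fun q _ => le_rfl
  have hpreg : ContDiffOn ℝ 2 p D := hp ▸ hLreg.sub (hvreg.pow 2)
  have hN : (fun r => u r ^ 2 + p r) = N := funext fun r => by
    have := sq_sqrt_half_sub_sq_sqrt_half (L r - N r) (M r)
    simp only [hu, hv, hp]
    linarith
  have hL : (fun r => v r ^ 2 + p r) = L := funext fun r => by simp only [hp]; ring
  have huv : EqOn (fun r => u r * v r) (fun r => -M r) D := fun r hr => by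
    simp only [hu, hv]
    rw [sqrt_half_mul_sqrt_half, abs_of_neg (hMneg r hr)]
  have hmom := fun q hq => momentum_of_gaussCodazzi (hGC q hq) hN hL
    (huv.eventuallyEq_of_mem (hDo.mem_nhds hq)) (hevolu q hq) (hevolv q hq)
  have hdiv : ∀ q ∈ D, pdt (fun r => pdx1 u r + pdx2 v r) q = 0 := by
    intro q hq
    have hpoisson := hpoisson q hq
    simp only [pdx1_eq_lineDeriv, pdx2_eq_lineDeriv, pdt_eq_lineDeriv] at hmom hpoisson ⊢
    exact lineDeriv_divergence_eq_zero_of_euler hDo hureg hvreg hpreg (fun r hr => (hmom r hr).1)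
      (fun r hr => (hmom r hr).2) hq hpoisson
  refine ⟨fun q hq => ⟨(hmom q hq).1, (hmom q hq).2, hdiv q hq⟩,
    fun t₀ ht₀ h0 => eqOn_zero_of_pdt_eq_zero hD (fun q hq => ?_) hdiv ht₀ h0⟩
  simp only [pdx1_eq_lineDeriv, pdx2_eq_lineDeriv]
  exact (hureg.hasFDerivAt_lineDeriv hDo hq _).differentiableAt.add
    (hvreg.hasFDerivAt_lineDeriv hDo hq _).differentiableAt

/-- Corollary 5.2: if `(L, M, N, g)` satisfies the Gauss–Codazzi equations and the
fluid variables `u, v, p` recovered from `(L, M, N)` satisfy the evolution equations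
and the pressure Poisson equation, then `(u, v, p)` satisfies the momentum equations
and `∂_t(∂₁u + ∂₂v) = 0`; in particular, if `∂₁u + ∂₂v = 0` at some time `t₀`, then
`(u, v, p)` solves the full incompressible Euler equations. -/
theorem statement11 (Ω : Set (ℝ × ℝ)) (hΩ : IsOpen Ω) (T : ℝ) (hT : 0 < T)
    (L M N g11 g12 g22 : ℝ × ℝ × ℝ → ℝ)
    (D : Set (ℝ × ℝ × ℝ))
    (hD : D = {q : ℝ × ℝ × ℝ | (q.1, q.2.1) ∈ Ω ∧ q.2.2 ∈ Set.Ioo 0 T})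
    (hLreg : ContDiffOn ℝ 2 L D) (hMreg : ContDiffOn ℝ 2 M D) (hNreg : ContDiffOn ℝ 2 N D)
    (hg11 : ContDiffOn ℝ 2 g11 D) (hg12 : ContDiffOn ℝ 2 g12 D) (hg22 : ContDiffOn ℝ 2 g22 D)
    (hdet : ∀ q ∈ D, 0 < detg g11 g12 g22 q)
    (hMneg : ∀ q ∈ D, M q < 0)
    (hGC : ∀ q ∈ D, GaussCodazzi L M N g11 g12 g22 q)
    (u v p : ℝ × ℝ × ℝ → ℝ)
    (hu : u = fun q =>
      Real.sqrt ((1 / 2) * (-(L q - N q) + Real.sqrt ((L q - N q) ^ 2 + 4 * (M q) ^ 2))))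
    (hv : v = fun q =>
      Real.sqrt ((1 / 2) * ((L q - N q) + Real.sqrt ((L q - N q) ^ 2 + 4 * (M q) ^ 2))))
    (hp : p = fun q => L q - (v q) ^ 2)
    (hevolu : ∀ q ∈ D, pdt u q =
      Gamma1_22 g11 g12 g22 q * L q - 2 * Gamma1_12 g11 g12 g22 q * M q
        + Gamma1_11 g11 g12 g22 q * N q)
    (hevolv : ∀ q ∈ D, pdt v q =
      Gamma2_22 g11 g12 g22 q * L q - 2 * Gamma2_12 g11 g12 g22 q * M q
        + Gamma2_11 g11 g12 g22 q * N q)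
    (hpoisson : ∀ q ∈ D,
      pdx1 (pdx1 (fun r => (u r) ^ 2)) q + 2 * pdx1 (pdx2 (fun r => u r * v r)) q
        + pdx2 (pdx2 (fun r => (v r) ^ 2)) q
      = -(pdx1 (pdx1 p) q + pdx2 (pdx2 p) q)) :
    (∀ q ∈ D,
      pdx1 (fun r => (u r) ^ 2 + p r) q + pdx2 (fun r => u r * v r) q = -(pdt u q) ∧
      pdx1 (fun r => u r * v r) q + pdx2 (fun r => (v r) ^ 2 + p r) q = -(pdt v q) ∧
      pdt (fun r => pdx1 u r + pdx2 v r) q = 0) ∧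
    (∀ t₀ ∈ Set.Ioo 0 T,
      (∀ q ∈ D, q.2.2 = t₀ → pdx1 u q + pdx2 v q = 0) →
      ∀ q ∈ D, pdx1 u q + pdx2 v q = 0) :=
  statement11_general Ω hΩ T L M N g11 g12 g22 D hD hLreg hMreg hNreg hMneg hGC u v p hu hv hp
    hevolu hevolv hpoisson
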